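/- Let L_n ⊆ S_n be a zigzag language and let π, ρ, σ be three consecutive permutations in J(L_n). If ρ is obtained from π by a jump of a value j < n, σ is obtained from ρ by a jump of the value n, and the value j is neither at the first nor at the last position of p^{n−j}(ρ), then s_{n,i}^ρ = s_{n,i}^π for all i = 1,…,n−1. -/

import Mathlib

/-!
Shared definitions: permutations in one-line notation as lists of naturals,
deletion `p`, insertion `c_i`, zigzag languages, the Gray code sequence `J(L_n)`,
jumps, minimal jumps, the auxiliary sequences `s_n^π`, Algorithm M,
vincular pattern containment and 2-clumped permutations.
-/

/-- `S_n`: permutations of `{1,…,n}` in one-line notation, as lists of naturals. -/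
def SymmList (n : ℕ) : Set (List ℕ) := {l | List.Perm l (List.range' 1 n)}

/-- The identity permutation `id_n = 1 2 ⋯ n`. -/
def idPerm (n : ℕ) : List ℕ := List.range' 1 n

/-- `p(π)`: delete the largest entry `n = π.length` from the permutation `π ∈ S_n`. -/
def pdel (l : List ℕ) : List ℕ := l.erase l.length

/-- `c_i(π)`: insert the new largest value `π.length + 1` at (1-indexed) position `i`. -/
def cins (i : ℕ) (l : List ℕ) : List ℕ :=
  l.take (i - 1) ++ (l.length + 1) :: l.drop (i - 1)

/-- Zigzag languages of permutations: `L_0 = {ε}` is a zigzag language, and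
`L ⊆ S_{n+1}` is a zigzag language if `p(L)` is a zigzag language and
`c_1(π), c_{n+1}(π) ∈ L` for every `π ∈ p(L)`. -/
inductive IsZigzag : ℕ → Set (List ℕ) → Prop
  | zero : IsZigzag 0 {[]}
  | succ (n : ℕ) (L : Set (List ℕ)) :
      L ⊆ SymmList (n + 1) →
      IsZigzag n (pdel '' L) →
      (∀ l ∈ pdel '' L, cins 1 l ∈ L ∧ cins (n + 1) l ∈ L) →
      IsZigzag (n + 1) L

/-- `→c(π)`: the sequence of those `c_1(π),…,c_n(π)` lying in `L`,
in increasing order of the insertion position. -/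
noncomputable def cSeq (L : Set (List ℕ)) (n : ℕ) (l : List ℕ) : List (List ℕ) :=
  ((List.range' 1 n).map (fun i => cins i l)).filter
    (fun x => @decide (x ∈ L) (Classical.propDecidable _))

/-- The Gray code sequence `J(L_n)` of a language `L ⊆ S_n`:
`J(L_0) = ε`, and `J(L_{n+1})` is obtained from `J(L_n)` (for the language
`p(L)`) by replacing its entries alternately by `←c(π)` (the reverse of
`→c(π)`) and `→c(π)`. -/
noncomputable def Jseq : ℕ → Set (List ℕ) → List (List ℕ)
  | 0, _ => [[]]
  | (n + 1), L =>
      (((Jseq n (pdel '' L)).mapIdx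
        (fun k π => if k % 2 = 0 then (cSeq L (n + 1) π).reverse
                    else cSeq L (n + 1) π)).flatten)

/-- `ρ` is obtained from `π` by a right jump of the value `v` by `d` steps. -/
def RightJump (π ρ : List ℕ) (v d : ℕ) : Prop :=
  0 < d ∧ ∃ A B C : List ℕ, B.length = d ∧ (∀ x ∈ B, x < v) ∧
    π = A ++ v :: (B ++ C) ∧ ρ = A ++ (B ++ v :: C)

/-- `ρ` is obtained from `π` by a left jump of the value `v` by `d` steps. -/
def LeftJump (π ρ : List ℕ) (v d : ℕ) : Prop := RightJump ρ π v d

/-- A right jump that is minimal with respect to `L`: every right jump of the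
same value by fewer steps yields a permutation not in `L`. -/
def MinimalRightJump (L : Set (List ℕ)) (π ρ : List ℕ) (v d : ℕ) : Prop :=
  RightJump π ρ v d ∧ ∀ d' ρ', d' < d → RightJump π ρ' v d' → ρ' ∉ L

/-- A left jump that is minimal with respect to `L`. -/
def MinimalLeftJump (L : Set (List ℕ)) (π ρ : List ℕ) (v d : ℕ) : Prop :=
  LeftJump π ρ v d ∧ ∀ d' ρ', d' < d → LeftJump π ρ' v d' → ρ' ∉ L

/-- The auxiliary sequence `s_n^π` of a permutation `π` occurring in `J(L_n)`,
as a function of the index `i ∈ {1,…,n}` (value `0` outside this range). -/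
noncomputable def sVec : ℕ → Set (List ℕ) → List ℕ → ℕ → ℕ
  | 0, _, _, _ => 0
  | 1, _, _, i => if i = 1 then 1 else 0
  | (n + 2), L, π, i =>
      let L' := pdel '' L
      let π' := pdel π
      let cbar := if ((Jseq (n + 1) L').idxOf π') % 2 = 0
                  then (cSeq L (n + 2) π').reverse else cSeq L (n + 2) π'
      if cbar.getLast? = some π then
        (if i ≤ n then sVec (n + 1) L' π' i
         else if i = n + 1 then n + 1
         else if i = n + 2 then sVec (n + 1) L' π' (n + 1) else 0)
      else
        (if i ≤ n + 1 then sVec (n + 1) L' π' i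
         else if i = n + 2 then n + 2 else 0)

/-- `j` is at the first position of `l`, or the entry immediately left of `j`
in `l` is larger than `j`. -/
def AtLeftTurn (l : List ℕ) (j : ℕ) : Prop :=
  ∃ A B : List ℕ, l = A ++ j :: B ∧ (A = [] ∨ ∃ x, A.getLast? = some x ∧ j < x)

/-- `j` is at the last position of `l`, or the entry immediately right of `j`
in `l` is larger than `j`. -/
def AtRightTurn (l : List ℕ) (j : ℕ) : Prop :=
  ∃ A B : List ℕ, l = A ++ j :: B ∧ (B = [] ∨ ∃ x, B.head? = some x ∧ j < x)

/-- `j` is not at the first position of `l`, and the entry immediately left of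
`j` in `l` is smaller than `j`. -/
def SmallerLeftNeighbor (l : List ℕ) (j : ℕ) : Prop :=
  ∃ A B : List ℕ, ∃ x, l = A ++ j :: B ∧ A.getLast? = some x ∧ x < j

/-- `j` is not at the last position of `l`, and the entry immediately right of
`j` in `l` is smaller than `j`. -/
def SmallerRightNeighbor (l : List ℕ) (j : ℕ) : Prop :=
  ∃ A B : List ℕ, ∃ x, l = A ++ j :: B ∧ B.head? = some x ∧ x < j

/-- A state of Algorithm M: the current permutation `π` and the auxiliary
arrays `o` and `s`; `o j = false` encodes direction `L` (left) and
`o j = true` encodes `R` (right). -/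
structure MState where
  perm : List ℕ
  o : ℕ → Bool
  s : ℕ → ℕ

/-- The initial state of Algorithm M (step M1): `π = id_n`, `o_j = L`, `s_j = j`. -/
def MInit (n : ℕ) : MState := ⟨idPerm n, fun _ => false, fun j => j⟩

/-- One iteration (steps M3–M5) of Algorithm M on a language `L ⊆ S_n`:
with `j := s_n ≠ 1`, the permutation jumps minimally in the direction `o_j`
(step M4), and the arrays `o`, `s` are updated as in step M5. -/
def MStep (L : Set (List ℕ)) (n : ℕ) (σ σ' : MState) : Prop :=
  σ.s n ≠ 1 ∧
  σ'.perm ∈ L ∧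
  ((σ.o (σ.s n) = false ∧ ∃ d, MinimalLeftJump L σ.perm σ'.perm (σ.s n) d) ∨
   (σ.o (σ.s n) = true ∧ ∃ d, MinimalRightJump L σ.perm σ'.perm (σ.s n) d)) ∧
  (((σ.o (σ.s n) = false ∧ AtLeftTurn σ'.perm (σ.s n)) ∨
    (σ.o (σ.s n) = true ∧ AtRightTurn σ'.perm (σ.s n))) →
      σ'.o = Function.update σ.o (σ.s n) (!σ.o (σ.s n)) ∧
      σ'.s = Function.update (Function.update (Function.update σ.s n n) (σ.s n)
               ((Function.update σ.s n n) (σ.s n - 1))) (σ.s n - 1) (σ.s n - 1)) ∧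
  (¬ ((σ.o (σ.s n) = false ∧ AtLeftTurn σ'.perm (σ.s n)) ∨
      (σ.o (σ.s n) = true ∧ AtRightTurn σ'.perm (σ.s n))) →
      σ'.o = σ.o ∧ σ'.s = Function.update σ.s n n)

/-- `π` contains the vincular pattern `pat` whose marked adjacent pair starts
at (0-indexed) position `k` of `pat`. -/
def ContainsVincular (π pat : List ℕ) (k : ℕ) : Prop :=
  ∃ f : ℕ → ℕ, StrictMonoOn f (Set.Iio pat.length) ∧
    (∀ i < pat.length, f i < π.length) ∧
    f (k + 1) = f k + 1 ∧
    (∀ i < pat.length, ∀ j < pat.length,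
      (pat.getD i 0 < pat.getD j 0 ↔ π.getD (f i) 0 < π.getD (f j) 0))

/-- 2-clumped permutations: those avoiding the vincular patterns
`3(51)24`, `3(51)42`, `24(51)3` and `42(51)3`. -/
def TwoClumped (π : List ℕ) : Prop :=
  ¬ ContainsVincular π [3, 5, 1, 2, 4] 1 ∧ ¬ ContainsVincular π [3, 5, 1, 4, 2] 1 ∧
  ¬ ContainsVincular π [2, 4, 5, 1, 3] 2 ∧ ¬ ContainsVincular π [4, 2, 5, 1, 3] 2

/-- `S'_n`: the set of 2-clumped permutations in `S_n`. -/
def SClump (n : ℕ) : Set (List ℕ) := {l ∈ SymmList n | TwoClumped l}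

/-- `B_n`: the permutations obtained from `1` by repeatedly inserting the new
largest value at the first or the last position. -/
def Bset : ℕ → Set (List ℕ)
  | 0 => {[]}
  | 1 => {[1]}
  | (n + 2) => {l | ∃ π ∈ Bset (n + 1), l = cins 1 π ∨ l = cins (n + 2) π}


/-!
The invariant is `s^ρ = s^π` with the last entry replaced by `n`; it is proved by induction on
`n - j`. Two consecutive permutations of `J(L_n)` either lie in one block `c̄(π')`, where `π` is
not the last one, or `π` ends its block, `ρ` begins the next one (and is not its last, the
block ends `c_1`, `c_n` being distinct), and `p π`, `p ρ` are consecutive in `J(L_{n-1})`.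
A jump of `j < n` survives deleting `n`, so `p π ≠ p ρ` and the second case holds; the
recursion for `s` then turns the invariant for `p π`, `p ρ` into the one for `π`, `ρ`.
At the level `n = j` the jump of `n` leaves `p π = p ρ`, so `π` is not last in its block, and
neither is `ρ`, because the block ends carry `n` at the first or last position. Hence both
sequences are `s^{p π}` extended by `n`.
-/

open Function

namespace List

variable {α : Type*}

theorem Nodup.idxOf_eq_of_getElem? [BEq α] [LawfulBEq α] {l : List α} (h : l.Nodup) {i : ℕ}
    {a : α} (hi : l[i]? = some a) : l.idxOf a = i := by
  obtain ⟨hlt, rfl⟩ := getElem?_eq_some_iff.mp hi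
  exact h.idxOf_getElem i hlt

theorem Nodup.getElem?_ne_getElem?_succ {l : List α} (h : l.Nodup) {t : ℕ} {a : α}
    (ha : l[t]? = some a) : l[t + 1]? ≠ some a := fun hb => by
  have := (getElem?_inj (getElem?_eq_some_iff.mp ha).1 h).mp (ha.trans hb.symm)
  omega

theorem Nodup.getLast?_ne_of_getElem?_succ {l : List α} (h : l.Nodup) {t : ℕ} {a b : α}
    (ha : l[t]? = some a) (hb : l[t + 1]? = some b) : l.getLast? ≠ some a := fun hlast => by
  rw [getLast?_eq_getElem?] at hlast
  have := (getElem?_inj (getElem?_eq_some_iff.mp ha).1 h).mp (ha.trans hlast.symm)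
  have := (getElem?_eq_some_iff.mp hb).1
  omega

theorem getElem?_flatten_consecutive {ls : List (List α)} (hne : ∀ l ∈ ls, l ≠ []) {k : ℕ}
    {a b : α} (ha : ls.flatten[k]? = some a) (hb : ls.flatten[k + 1]? = some b) :
    (∃ (i t : ℕ) (l : List α), ls[i]? = some l ∧ l[t]? = some a ∧ l[t + 1]? = some b) ∨
    (∃ (i : ℕ) (l l' : List α), ls[i]? = some l ∧ ls[i + 1]? = some l' ∧
      l.getLast? = some a ∧ l'.head? = some b) := by
  induction ls generalizing k with
  | nil => simp at ha
  | cons l ls ih =>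
    rw [flatten_cons] at ha hb
    by_cases hk : k + 1 < l.length
    · rw [getElem?_append_left (by omega)] at ha
      rw [getElem?_append_left hk] at hb
      exact Or.inl ⟨0, k, l, rfl, ha, hb⟩
    by_cases hk' : k < l.length
    · rw [getElem?_append_left hk'] at ha
      rw [getElem?_append_right (by omega), show k + 1 - l.length = 0 by omega] at hb
      obtain _ | ⟨l', ls'⟩ := ls
      · simp at hb
      · have hl' : l' ≠ [] := hne l' (by simp)
        rw [flatten_cons, getElem?_append_left (length_pos_iff.mpr hl')] at hb
        refine Or.inr ⟨0, l, l', rfl, rfl, ?_, by rwa [head?_eq_getElem?]⟩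
        rwa [getLast?_eq_getElem?, show l.length - 1 = k by omega]
    · rw [getElem?_append_right (by omega)] at ha
      rw [getElem?_append_right (by omega), show k + 1 - l.length = k - l.length + 1 by omega]
        at hb
      rcases ih (fun l hl => hne l (mem_cons_of_mem _ hl)) ha hb with
        ⟨i, t, l₁, h₁, h₂, h₃⟩ | ⟨i, l₁, l₂, h₁, h₂, h₃, h₄⟩
      · exact Or.inl ⟨i + 1, t, l₁, h₁, h₂, h₃⟩
      · exact Or.inr ⟨i + 1, l₁, l₂, h₁, h₂, h₃, h₄⟩

end List

theorem cins_length (i : ℕ) (l : List ℕ) : (cins i l).length = l.length + 1 := by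
  simp only [cins, List.length_append, List.length_take, List.length_cons, List.length_drop]
  omega

theorem cins_one (l : List ℕ) : cins 1 l = (l.length + 1) :: l := by
  simp [cins]

theorem cins_length_add_one (l : List ℕ) : cins (l.length + 1) l = l ++ [l.length + 1] := by
  simp [cins]

theorem pdel_cins {l : List ℕ} (h : l.length + 1 ∉ l) (i : ℕ) : pdel (cins i l) = l := by
  rw [pdel, cins_length, cins, List.erase_append_right _ (fun hm => h (List.mem_of_mem_take hm)),
    List.erase_cons_head, List.take_append_drop]

theorem idxOf_cins {l : List ℕ} (h : l.length + 1 ∉ l) {i : ℕ} (hi : i ≤ l.length + 1) :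
    (cins i l).idxOf (l.length + 1) = i - 1 := by
  rw [cins, List.idxOf_append_of_notMem (fun hm => h (List.mem_of_mem_take hm)),
    List.idxOf_cons_self, List.length_take]
  omega

theorem cins_injOn {l : List ℕ} (h : l.length + 1 ∉ l) :
    Set.InjOn (fun i => cins i l) (Set.Icc 1 (l.length + 1)) := fun i hi i' hi' he => by
  have := congrArg (List.idxOf (l.length + 1)) (show cins i l = cins i' l from he)
  rw [idxOf_cins h hi.2, idxOf_cins h hi'.2] at this
  have := hi.1; have := hi'.1
  omega

theorem length_eq_of_mem_symmList {n : ℕ} {l : List ℕ} (h : l ∈ SymmList n) :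
    l.length = n := by
  simpa using h.length_eq

theorem nodup_of_mem_symmList {n : ℕ} {l : List ℕ} (h : l ∈ SymmList n) : l.Nodup :=
  h.nodup_iff.mpr List.nodup_range'

theorem length_add_one_notMem_of_mem_symmList {n : ℕ} {l : List ℕ} (h : l ∈ SymmList n) :
    l.length + 1 ∉ l := fun hm => by
  have := List.mem_range'_1.mp (h.mem_iff.mp hm)
  rw [length_eq_of_mem_symmList h] at this
  omega

namespace IsZigzag

variable {n : ℕ} {L : Set (List ℕ)}

theorem subset_symmList (h : IsZigzag n L) : L ⊆ SymmList n := by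
  cases h with
  | zero => rintro _ rfl; simp [SymmList]
  | succ n L hsub _ _ => exact hsub

theorem image_pdel (h : IsZigzag (n + 1) L) : IsZigzag n (pdel '' L) := by
  cases h with | succ n L _ himage _ => exact himage

theorem cins_one_mem (h : IsZigzag (n + 1) L) {q : List ℕ} (hq : q ∈ pdel '' L) :
    cins 1 q ∈ L := by
  cases h with | succ n L _ _ hcins => exact (hcins q hq).1

theorem cins_last_mem (h : IsZigzag (n + 1) L) {q : List ℕ} (hq : q ∈ pdel '' L) :
    cins (n + 1) q ∈ L := by
  cases h with | succ n L _ _ hcins => exact (hcins q hq).2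

end IsZigzag

section Blocks

variable {L : Set (List ℕ)} {N : ℕ} {q : List ℕ}

theorem mem_cSeq {x : List ℕ} :
    x ∈ cSeq L N q ↔ (∃ i ∈ Set.Icc 1 N, cins i q = x) ∧ x ∈ L := by
  simp only [cSeq, List.mem_filter, List.mem_map, List.mem_range'_1, decide_eq_true_eq,
    Set.mem_Icc]
  constructor
  · rintro ⟨⟨i, hi, rfl⟩, hx⟩; exact ⟨⟨i, by omega, rfl⟩, hx⟩
  · rintro ⟨⟨i, hi, rfl⟩, hx⟩; exact ⟨⟨i, by omega, rfl⟩, hx⟩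

theorem cSeq_head? (hN : 1 ≤ N) (h : cins 1 q ∈ L) : (cSeq L N q).head? = some (cins 1 q) := by
  obtain ⟨m, rfl⟩ : ∃ m, N = m + 1 := ⟨N - 1, by omega⟩
  simp [cSeq, List.range'_succ, h]

theorem cSeq_getLast? (hN : 1 ≤ N) (h : cins N q ∈ L) :
    (cSeq L N q).getLast? = some (cins N q) := by
  obtain ⟨m, rfl⟩ : ∃ m, N = m + 1 := ⟨N - 1, by omega⟩
  simp [cSeq, List.range'_concat, h, Nat.add_comm 1 m]

theorem cSeq_nodup (hq : q.length + 1 ∉ q) (hN : N ≤ q.length + 1) : (cSeq L N q).Nodup := by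
  have hIcc {i : ℕ} (hi : i ∈ List.range' 1 N) : i ∈ Set.Icc 1 (q.length + 1) := by
    have := List.mem_range'_1.mp hi
    exact ⟨this.1, by omega⟩
  exact (List.Nodup.map_on (fun _ hi _ hi' => cins_injOn hq (hIcc hi) (hIcc hi'))
    List.nodup_range').filter _

/-- `c̄(q)` for the `q` at position `b` of `J(L_{N-1})`; `b` is 0-indexed, so even `b` means
an odd position in the paper and the reversed order. -/
noncomputable def zigzagBlock (L : Set (List ℕ)) (N b : ℕ) (q : List ℕ) : List (List ℕ) :=
  if b % 2 = 0 then (cSeq L N q).reverse else cSeq L N q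

theorem Jseq_succ (n : ℕ) (L : Set (List ℕ)) :
    Jseq (n + 1) L = ((Jseq n (pdel '' L)).mapIdx (zigzagBlock L (n + 1))).flatten := rfl

variable {b : ℕ}

theorem mem_zigzagBlock {x : List ℕ} : x ∈ zigzagBlock L N b q ↔ x ∈ cSeq L N q := by
  unfold zigzagBlock; split_ifs <;> simp

theorem pdel_of_mem_zigzagBlock (hq : q.length + 1 ∉ q) {x : List ℕ}
    (hx : x ∈ zigzagBlock L N b q) : pdel x = q := by
  obtain ⟨⟨i, -, rfl⟩, -⟩ := mem_cSeq.mp (mem_zigzagBlock.mp hx)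
  exact pdel_cins hq i

theorem zigzagBlock_nodup (hq : q.length + 1 ∉ q) (hN : N ≤ q.length + 1) :
    (zigzagBlock L N b q).Nodup := by
  unfold zigzagBlock; split_ifs
  · exact List.nodup_reverse.mpr (cSeq_nodup hq hN)
  · exact cSeq_nodup hq hN

theorem zigzagBlock_head?_getLast? (hN : 1 ≤ N) (h₁ : cins 1 q ∈ L) (hN' : cins N q ∈ L) :
    ((zigzagBlock L N b q).head? = some (cins N q) ∧
      (zigzagBlock L N b q).getLast? = some (cins 1 q)) ∨
    ((zigzagBlock L N b q).head? = some (cins 1 q) ∧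
      (zigzagBlock L N b q).getLast? = some (cins N q)) := by
  unfold zigzagBlock; split_ifs
  · exact Or.inl ⟨by simp [cSeq_getLast? hN hN'], by simp [cSeq_head? hN h₁]⟩
  · exact Or.inr ⟨cSeq_head? hN h₁, cSeq_getLast? hN hN'⟩

end Blocks

theorem mem_of_mem_Jseq {n : ℕ} {L : Set (List ℕ)} (hL : IsZigzag n L) {x : List ℕ}
    (hx : x ∈ Jseq n L) : x ∈ L := by
  cases n with
  | zero => cases hL; simpa [Jseq] using hx
  | succ n =>
    rw [Jseq_succ] at hx
    obtain ⟨_, hblock, hx⟩ := List.mem_flatten.mp hx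
    obtain ⟨b, _, rfl⟩ := List.exists_of_mem_mapIdx hblock
    exact (mem_cSeq.mp (mem_zigzagBlock.mp hx)).2

theorem mem_symmList_of_mem_Jseq {n : ℕ} {L : Set (List ℕ)} (hL : IsZigzag n L) {x : List ℕ}
    (hx : x ∈ Jseq n L) : x ∈ SymmList n :=
  hL.subset_symmList (mem_of_mem_Jseq hL hx)

theorem Jseq_nodup {n : ℕ} {L : Set (List ℕ)} (hL : IsZigzag n L) : (Jseq n L).Nodup := by
  induction n generalizing L with
  | zero => simp [Jseq]
  | succ n ih =>
    have hparent : ∀ q ∈ Jseq n (pdel '' L), q.length + 1 ∉ q ∧ q.length = n := fun q hq =>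
      have hq := mem_symmList_of_mem_Jseq hL.image_pdel hq
      ⟨length_add_one_notMem_of_mem_symmList hq, length_eq_of_mem_symmList hq⟩
    rw [Jseq_succ, List.nodup_flatten, List.pairwise_iff_getElem]
    refine ⟨fun _ hblock => ?_, fun b b' hb hb' hbb' x hx hx' => ?_⟩
    · obtain ⟨b, hb, rfl⟩ := List.exists_of_mem_mapIdx hblock
      obtain ⟨hq, hlen⟩ := hparent _ (List.getElem_mem hb)
      exact zigzagBlock_nodup hq (by omega)
    · simp only [List.getElem_mapIdx, List.length_mapIdx] at hx hx' hb hb'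
      have e := pdel_of_mem_zigzagBlock (hparent _ (List.getElem_mem hb)).1 hx
      rw [pdel_of_mem_zigzagBlock (hparent _ (List.getElem_mem hb')).1 hx'] at e
      exact absurd ((ih hL.image_pdel).getElem_inj_iff.mp e) (by omega)

def IsLastInBlock (m : ℕ) (L : Set (List ℕ)) (π : List ℕ) : Prop :=
  (zigzagBlock L (m + 1) ((Jseq m (pdel '' L)).idxOf (pdel π)) (pdel π)).getLast? = some π

section SVec

variable {L : Set (List ℕ)} {π : List ℕ}

theorem sVec_eq_zero_of_lt {N i : ℕ} (h : N < i) : sVec N L π i = 0 := by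
  match N with
  | 0 => rfl
  | 1 => exact if_neg (by omega)
  | n + 2 => simp only [sVec]; split_ifs <;> first | rfl | omega

theorem sVec_of_isLastInBlock {n : ℕ} (h : IsLastInBlock (n + 1) L π) :
    sVec (n + 2) L π = update (update (sVec (n + 1) (pdel '' L) (pdel π)) (n + 1) (n + 1))
      (n + 2) (sVec (n + 1) (pdel '' L) (pdel π) (n + 1)) := by
  unfold IsLastInBlock zigzagBlock at h
  funext i
  simp only [sVec, h, if_true, update_apply]
  split_ifs <;> first | rfl | omega | exact (sVec_eq_zero_of_lt (by omega)).symm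

theorem sVec_of_not_isLastInBlock {n : ℕ} (h : ¬ IsLastInBlock (n + 1) L π) :
    sVec (n + 2) L π = update (sVec (n + 1) (pdel '' L) (pdel π)) (n + 2) (n + 2) := by
  unfold IsLastInBlock zigzagBlock at h
  funext i
  simp only [sVec, h, if_false, update_apply]
  split_ifs <;> first | rfl | omega | exact (sVec_eq_zero_of_lt (by omega)).symm

end SVec

section Consecutive

variable {L : Set (List ℕ)}

theorem isLastInBlock_iff {m b : ℕ} (hL : IsZigzag (m + 1) L) {q x : List ℕ}
    (hb : (Jseq m (pdel '' L))[b]? = some q) (hx : x ∈ zigzagBlock L (m + 1) b q) :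
    IsLastInBlock m L x ↔ (zigzagBlock L (m + 1) b q).getLast? = some x := by
  have hq := mem_symmList_of_mem_Jseq hL.image_pdel (List.mem_of_getElem? hb)
  rw [IsLastInBlock, pdel_of_mem_zigzagBlock (length_add_one_notMem_of_mem_symmList hq) hx,
    (Jseq_nodup hL.image_pdel).idxOf_eq_of_getElem? hb]

theorem zigzagBlock_getLast?_ne_of_head? {N b : ℕ} {q x : List ℕ} (hq : q.length + 1 ∉ q)
    (hN : 2 ≤ N) (hNq : N ≤ q.length + 1) (h₁ : cins 1 q ∈ L) (hN' : cins N q ∈ L)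
    (hx : (zigzagBlock L N b q).head? = some x) : (zigzagBlock L N b q).getLast? ≠ some x := by
  have hne : cins 1 q ≠ cins N q := fun h => by
    have := cins_injOn hq ⟨le_rfl, by omega⟩ ⟨by omega, hNq⟩ h
    omega
  rcases zigzagBlock_head?_getLast? (b := b) (by omega) h₁ hN' with ⟨h, h'⟩ | ⟨h, h'⟩ <;>
    rw [h] at hx <;> rw [h', ← hx] <;> simpa [eq_comm] using hne

theorem not_isLastInBlock_of_head?_ne {n : ℕ} (hL : IsZigzag (n + 2) L) {ρ : List ℕ}
    (hρ : ρ ∈ L) (hfirst : ρ.head? ≠ some (n + 2)) (hlast : ρ.getLast? ≠ some (n + 2)) :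
    ¬ IsLastInBlock (n + 1) L ρ := fun h => by
  have hq : pdel ρ ∈ pdel '' L := ⟨ρ, hρ, rfl⟩
  have hlen := length_eq_of_mem_symmList (hL.image_pdel.subset_symmList hq)
  rcases zigzagBlock_head?_getLast? (b := (Jseq (n + 1) (pdel '' L)).idxOf (pdel ρ)) (by omega)
    (hL.cins_one_mem hq) (hL.cins_last_mem hq) with ⟨-, h'⟩ | ⟨-, h'⟩ <;>
    rw [IsLastInBlock, h', Option.some_inj] at h
  · rw [← h, cins_one, hlen] at hfirst
    exact hfirst rfl
  · rw [← h, ← hlen, cins_length_add_one, hlen] at hlast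
    exact hlast (List.getLast?_concat)

theorem Jseq_consecutive_cases {n k : ℕ} (hL : IsZigzag (n + 2) L) {π ρ : List ℕ}
    (hπ : (Jseq (n + 2) L)[k]? = some π) (hρ : (Jseq (n + 2) L)[k + 1]? = some ρ) :
    (pdel π = pdel ρ ∧ ¬ IsLastInBlock (n + 1) L π) ∨
    (∃ b, (Jseq (n + 1) (pdel '' L))[b]? = some (pdel π) ∧
      (Jseq (n + 1) (pdel '' L))[b + 1]? = some (pdel ρ) ∧
      IsLastInBlock (n + 1) L π ∧ ¬ IsLastInBlock (n + 1) L ρ) := by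
  have hparent : ∀ {b q}, (Jseq (n + 1) (pdel '' L))[b]? = some q →
      q ∈ pdel '' L ∧ q.length + 1 ∉ q ∧ q.length = n + 1 := fun hb =>
    have hq := List.mem_of_getElem? hb
    have hqS := mem_symmList_of_mem_Jseq hL.image_pdel hq
    ⟨mem_of_mem_Jseq hL.image_pdel hq, length_add_one_notMem_of_mem_symmList hqS,
      length_eq_of_mem_symmList hqS⟩
  have hblock : ∀ {b block}, ((Jseq (n + 1) (pdel '' L)).mapIdx (zigzagBlock L (n + 2)))[b]? =
      some block → ∃ q, (Jseq (n + 1) (pdel '' L))[b]? = some q ∧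
        zigzagBlock L (n + 2) b q = block := fun hb => by
    simpa only [List.getElem?_mapIdx, Option.map_eq_some_iff] using hb
  have hne : ∀ block ∈ (Jseq (n + 1) (pdel '' L)).mapIdx (zigzagBlock L (n + 2)),
      block ≠ [] := fun block hmem => by
    obtain ⟨b, hblk⟩ := List.getElem?_of_mem hmem
    obtain ⟨q, hb, rfl⟩ := hblock hblk
    obtain ⟨hq, -, -⟩ := hparent hb
    rcases zigzagBlock_head?_getLast? (b := b) (by omega)
      (hL.cins_one_mem hq) (hL.cins_last_mem hq) with ⟨h, -⟩ | ⟨h, -⟩ <;>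
      exact List.ne_nil_of_mem (List.mem_of_mem_head? h)
  rw [Jseq_succ] at hπ hρ
  rcases List.getElem?_flatten_consecutive hne hπ hρ with
    ⟨b, t, block, hblk, ht, ht'⟩ | ⟨b, block, block', hblk, hblk', hlast, hhead⟩
  · obtain ⟨q, hb, rfl⟩ := hblock hblk
    obtain ⟨-, hq, hlen⟩ := hparent hb
    have hπq := pdel_of_mem_zigzagBlock hq (List.mem_of_getElem? ht)
    refine Or.inl ⟨hπq.trans (pdel_of_mem_zigzagBlock hq (List.mem_of_getElem? ht')).symm, ?_⟩
    rw [isLastInBlock_iff hL hb (List.mem_of_getElem? ht)]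
    exact (zigzagBlock_nodup hq (by omega)).getLast?_ne_of_getElem?_succ ht ht'
  · obtain ⟨q, hb, rfl⟩ := hblock hblk
    obtain ⟨q', hb', rfl⟩ := hblock hblk'
    obtain ⟨-, hq, -⟩ := hparent hb
    obtain ⟨hq'L, hq', hlen'⟩ := hparent hb'
    have hπ := List.mem_of_getLast? hlast
    have hρ := List.mem_of_mem_head? hhead
    refine Or.inr ⟨b, by rwa [pdel_of_mem_zigzagBlock hq hπ], by
      rwa [pdel_of_mem_zigzagBlock hq' hρ], (isLastInBlock_iff hL hb hπ).mpr hlast, ?_⟩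
    rw [isLastInBlock_iff hL hb' hρ]
    exact zigzagBlock_getLast?_ne_of_head? hq' (by omega) (by omega) (hL.cins_one_mem hq'L)
      (hL.cins_last_mem hq'L) hhead

end Consecutive

namespace RightJump

variable {π ρ : List ℕ} {v d : ℕ}

theorem length_eq (h : RightJump π ρ v d) : ρ.length = π.length := by
  obtain ⟨-, A, B, C, -, -, rfl, rfl⟩ := h
  simp only [List.length_append, List.length_cons]
  omega

theorem two_le_length (h : RightJump π ρ v d) : 2 ≤ π.length := by
  obtain ⟨hd, A, B, C, hB, -, rfl, -⟩ := h
  simp only [List.length_append, List.length_cons]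
  omega

theorem ne (h : RightJump π ρ v d) : π ≠ ρ := by
  obtain ⟨hd, A, B, C, hB, hlt, rfl, rfl⟩ := h
  obtain _ | ⟨x, B⟩ := B
  · simp only [List.length_nil] at hB
    omega
  · have := hlt x List.mem_cons_self
    simp only [List.cons_append, ne_eq, List.append_cancel_left_eq, List.cons.injEq, not_and]
    omega

theorem pdel (h : RightJump π ρ v d) (hv : v < π.length) :
    RightJump (_root_.pdel π) (_root_.pdel ρ) v d := by
  unfold _root_.pdel
  rw [h.length_eq]
  obtain ⟨hd, A, B, C, hB, hlt, rfl, rfl⟩ := h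
  have hvm : v ≠ (A ++ v :: (B ++ C)).length := hv.ne
  have hmB : (A ++ v :: (B ++ C)).length ∉ B := fun hm => by have := hlt _ hm; omega
  by_cases hA : (A ++ v :: (B ++ C)).length ∈ A
  · simp only [List.erase_append_left _ hA]
    exact ⟨hd, _, B, C, hB, hlt, rfl, rfl⟩
  · simp only [List.erase_append_right _ hA, List.erase_cons, beq_iff_eq, hvm, if_false,
      List.erase_append_right _ hmB]
    exact ⟨hd, A, B, _, hB, hlt, rfl, rfl⟩

theorem pdel_eq (h : RightJump π ρ v d) (hπ : π.Nodup) (hv : π.length = v) :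
    _root_.pdel π = _root_.pdel ρ := by
  unfold _root_.pdel
  rw [h.length_eq, hv]
  obtain ⟨-, A, B, C, -, hlt, rfl, rfl⟩ := h
  have hvA : v ∉ A := fun hm => (List.nodup_append.mp hπ).2.2 v hm v List.mem_cons_self rfl
  have hvB : v ∉ B := fun hm => lt_irrefl v (hlt v hm)
  simp [List.erase_append_right _ hvA, List.erase_append_right _ hvB]

end RightJump

def IsJump (π ρ : List ℕ) (v : ℕ) : Prop := ∃ d, LeftJump π ρ v d ∨ RightJump π ρ v d

namespace IsJump

variable {π ρ : List ℕ} {v : ℕ}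

theorem two_le_length (h : IsJump π ρ v) : 2 ≤ π.length := by
  obtain ⟨d, h | h⟩ := h
  · exact h.length_eq ▸ h.two_le_length
  · exact h.two_le_length

theorem ne (h : IsJump π ρ v) : π ≠ ρ := by
  obtain ⟨d, h | h⟩ := h
  · exact h.ne.symm
  · exact h.ne

theorem pdel (h : IsJump π ρ v) (hv : v < π.length) : IsJump (pdel π) (pdel ρ) v := by
  obtain ⟨d, h | h⟩ := h
  · exact ⟨d, Or.inl (h.pdel (h.length_eq ▸ hv))⟩
  · exact ⟨d, Or.inr (h.pdel hv)⟩

theorem pdel_eq (h : IsJump π ρ v) (hπ : π.Nodup) (hρ : ρ.Nodup) (hv : π.length = v) :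
    _root_.pdel π = _root_.pdel ρ := by
  obtain ⟨d, h | h⟩ := h
  · exact (h.pdel_eq hρ (h.length_eq.symm.trans hv)).symm
  · exact h.pdel_eq hπ hv

end IsJump

section Stability

variable {n k : ℕ} {L : Set (List ℕ)} {π ρ : List ℕ}

theorem sVec_eq_update_of_isJump_top (hL : IsZigzag (n + 2) L)
    (hπ : (Jseq (n + 2) L)[k]? = some π) (hρ : (Jseq (n + 2) L)[k + 1]? = some ρ)
    (hjump : IsJump π ρ (n + 2)) (hfirst : ρ.head? ≠ some (n + 2))
    (hlast : ρ.getLast? ≠ some (n + 2)) :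
    sVec (n + 2) L ρ = update (sVec (n + 2) L π) (n + 2) (n + 2) := by
  have hπS := mem_symmList_of_mem_Jseq hL (List.mem_of_getElem? hπ)
  have hρS := mem_symmList_of_mem_Jseq hL (List.mem_of_getElem? hρ)
  have hsame : pdel π = pdel ρ := hjump.pdel_eq (nodup_of_mem_symmList hπS)
    (nodup_of_mem_symmList hρS) (length_eq_of_mem_symmList hπS)
  have hπlast : ¬ IsLastInBlock (n + 1) L π := by
    rcases Jseq_consecutive_cases hL hπ hρ with ⟨-, h⟩ | ⟨b, hb, hb', -⟩
    · exact h
    · rw [hsame] at hb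
      exact absurd hb' ((Jseq_nodup hL.image_pdel).getElem?_ne_getElem?_succ hb)
  have hρlast := not_isLastInBlock_of_head?_ne hL (mem_of_mem_Jseq hL (List.mem_of_getElem? hρ))
    hfirst hlast
  rw [sVec_of_not_isLastInBlock hρlast, sVec_of_not_isLastInBlock hπlast, hsame, update_idem]

theorem sVec_eq_update_of_isJump_succ {j : ℕ} (hL : IsZigzag (n + 2) L)
    (hπ : (Jseq (n + 2) L)[k]? = some π) (hρ : (Jseq (n + 2) L)[k + 1]? = some ρ)
    (hjump : IsJump π ρ j) (hj : j < n + 2)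
    (ih : ∀ b, (Jseq (n + 1) (pdel '' L))[b]? = some (pdel π) →
      (Jseq (n + 1) (pdel '' L))[b + 1]? = some (pdel ρ) →
      sVec (n + 1) (pdel '' L) (pdel ρ) =
        update (sVec (n + 1) (pdel '' L) (pdel π)) (n + 1) (n + 1)) :
    sVec (n + 2) L ρ = update (sVec (n + 2) L π) (n + 2) (n + 2) := by
  have hπS := mem_symmList_of_mem_Jseq hL (List.mem_of_getElem? hπ)
  rcases Jseq_consecutive_cases hL hπ hρ with ⟨hsame, -⟩ | ⟨b, hb, hb', hπlast, hρlast⟩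
  · exact absurd hsame (hjump.pdel (by rw [length_eq_of_mem_symmList hπS]; exact hj)).ne
  · rw [sVec_of_not_isLastInBlock hρlast, ih b hb hb', sVec_of_isLastInBlock hπlast,
      update_idem]

theorem sVec_eq_update_of_isJump {j N : ℕ} (hjN : j ≤ N) :
    ∀ {L : Set (List ℕ)} {k : ℕ} {π ρ : List ℕ}, IsZigzag N L →
      (Jseq N L)[k]? = some π → (Jseq N L)[k + 1]? = some ρ → IsJump π ρ j →
      (pdel^[N - j] ρ).head? ≠ some j → (pdel^[N - j] ρ).getLast? ≠ some j →
      sVec N L ρ = update (sVec N L π) N N := by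
  induction N, hjN using Nat.le_induction with
  | base =>
    intro L k π ρ hL hπ hρ hjump hfirst hlast
    have hlen :=
      length_eq_of_mem_symmList (mem_symmList_of_mem_Jseq hL (List.mem_of_getElem? hπ))
    obtain ⟨n, rfl⟩ : ∃ n, j = n + 2 := ⟨j - 2, by have := hjump.two_le_length; omega⟩
    rw [Nat.sub_self, iterate_zero_apply] at hfirst hlast
    exact sVec_eq_update_of_isJump_top hL hπ hρ hjump hfirst hlast
  | succ N hjN ih =>
    intro L k π ρ hL hπ hρ hjump hfirst hlast
    have hlen :=
      length_eq_of_mem_symmList (mem_symmList_of_mem_Jseq hL (List.mem_of_getElem? hπ))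
    obtain ⟨n, rfl⟩ : ∃ n, N = n + 1 := ⟨N - 1, by have := hjump.two_le_length; omega⟩
    rw [show n + 1 + 1 - j = n + 1 - j + 1 by omega, iterate_succ_apply] at hfirst hlast
    exact sVec_eq_update_of_isJump_succ hL hπ hρ hjump (by omega) fun b hb hb' =>
      ih hL.image_pdel hb hb' (hjump.pdel (by omega)) hfirst hlast

end Stability

theorem sVec_stable_jn_general (n : ℕ) (L : Set (List ℕ)) (hL : IsZigzag n L)
    (k : ℕ) (π ρ : List ℕ)
    (hπ : (Jseq n L)[k]? = some π) (hρ : (Jseq n L)[k + 1]? = some ρ)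
    (j : ℕ) (hj : j < n)
    (h1 : ∃ d, LeftJump π ρ j d ∨ RightJump π ρ j d)
    (hnotfirst : (pdel^[n - j] ρ).head? ≠ some j)
    (hnotlast : (pdel^[n - j] ρ).getLast? ≠ some j) :
    ∀ i, 1 ≤ i → i ≤ n - 1 → sVec n L ρ i = sVec n L π i := by
  intro i hi hin
  rw [sVec_eq_update_of_isJump hj.le hL hπ hρ h1 hnotfirst hnotlast, update_of_ne (by omega)]

/-- Let `L_n ⊆ S_n` be a zigzag language and let `π, ρ, σ` be
three consecutive permutations in `J(L_n)`. If `ρ` is obtained from `π` by a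
jump of a value `j < n`, `σ` is obtained from `ρ` by a jump of the value `n`,
and the value `j` is neither at the first nor at the last position of
`p^{n−j}(ρ)`, then `s_{n,i}^ρ = s_{n,i}^π` for all `i = 1,…,n−1`. -/
theorem sVec_stable_jn (n : ℕ) (L : Set (List ℕ)) (hL : IsZigzag n L)
    (k : ℕ) (π ρ σ : List ℕ)
    (hπ : (Jseq n L)[k]? = some π) (hρ : (Jseq n L)[k + 1]? = some ρ)
    (hσ : (Jseq n L)[k + 2]? = some σ)
    (j : ℕ) (hj : j < n)
    (h1 : ∃ d, LeftJump π ρ j d ∨ RightJump π ρ j d)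
    (h2 : ∃ d, LeftJump ρ σ n d ∨ RightJump ρ σ n d)
    (hnotfirst : (pdel^[n - j] ρ).head? ≠ some j)
    (hnotlast : (pdel^[n - j] ρ).getLast? ≠ some j) :
    ∀ i, 1 ≤ i → i ≤ n - 1 → sVec n L ρ i = sVec n L π i :=
  sVec_stable_jn_general n L hL k π ρ hπ hρ j hj h1 hnotfirst hnotlast
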